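/- arXiv:1312.2834 — 3 statements merged into one kernel-verified Lean document; each statement's English description precedes it below -/
import Mathlib

section
/- Uniform bound after the initial layer: Let E be a real Banach space, β > 0, T ≥ 1, let G : ℝ → E be continuous on [0, T] with ‖G(s)‖ ≤ M for all s ∈ [0, T], and let v : ℝ → E be differentiable on [0, T] with β·v'(t) + v(t) = G(t) for all t ∈ [0, T]. Then for every t with 1 ≤ t ≤ T: ‖v(t)‖ ≤ √β·‖v(0)‖ + M. (In particular this uses the elementary fact e^{−t/β} ≤ e^{−1/β} ≤ √β valid for all β > 0 and t ≥ 1.) -/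
/-!
Multiplying by the integrating factor `exp (t / β)` turns `β v' + v = G` into
`(exp (t / β) • v)' = β⁻¹ exp (t / β) • G`, whose norm is at most `M β⁻¹ exp (t / β)`; comparing
with the real solution of this bound gives the variation-of-constants estimate
`‖v t‖ ≤ exp (-t / β) ‖v 0‖ + (1 - exp (-t / β)) M`. For `t ≥ 1` the decaying factor is at most
`exp (-1 / β) ≤ √β`, because `exp (2 / β) ≥ 1 + 2 / β ≥ 1 / β`.
-/

open Real Set

theorem Real.exp_neg_div_le_sqrt {β t : ℝ} (hβ : 0 < β) (ht : 1 ≤ t) :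
    exp (-(t / β)) ≤ √β := by
  have hdecay : exp (-(t / β)) ≤ exp (-(1 / β)) := by gcongr
  have hgrowth : 1 / β ≤ exp (2 / β) := by
    have := add_one_le_exp (2 / β)
    have : 1 / β ≤ 2 / β := by gcongr; norm_num
    linarith
  have hsq : exp (-(1 / β)) ^ 2 ≤ β := by
    rw [← exp_nat_mul, show (2 : ℕ) * -(1 / β) = -(2 / β) by push_cast; ring, exp_neg]
    simpa using inv_anti₀ (by positivity) hgrowth
  exact hdecay.trans (le_sqrt_of_sq_le hsq)

section IntegratingFactor

variable {E : Type*} [NormedAddCommGroup E] [NormedSpace ℝ E] {β : ℝ} {v : ℝ → E} {w : E}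

theorem hasDerivAt_exp_div_smul (hβ : β ≠ 0) {t : ℝ} (hv : HasDerivAt v w t) :
    HasDerivAt (fun s ↦ exp (s / β) • v s) ((β⁻¹ * exp (t / β)) • (β • w + v t)) t := by
  refine (((hasDerivAt_id t).div_const β).exp.smul hv).congr_deriv ?_
  rw [smul_add, smul_smul, id]
  congr 2 <;> field_simp

theorem norm_le_of_smul_deriv_add_eq {T M : ℝ} {G v' : ℝ → E} (hβ : 0 < β)
    (hGM : ∀ s ∈ Icc (0 : ℝ) T, ‖G s‖ ≤ M)
    (hv : ∀ t ∈ Icc (0 : ℝ) T, HasDerivAt v (v' t) t)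
    (hode : ∀ t ∈ Icc (0 : ℝ) T, β • v' t + v t = G t) :
    ∀ t ∈ Icc (0 : ℝ) T, ‖v t‖ ≤ exp (-(t / β)) * ‖v 0‖ + (1 - exp (-(t / β))) * M := by
  have hderiv : ∀ t ∈ Icc (0 : ℝ) T,
      HasDerivAt (fun s ↦ exp (s / β) • v s) ((β⁻¹ * exp (t / β)) • G t) t := fun t ht ↦
    hode t ht ▸ hasDerivAt_exp_div_smul hβ.ne' (hv t ht)
  have hbound : ∀ t ∈ Icc (0 : ℝ) T, ‖exp (t / β) • v t‖ ≤ ‖v 0‖ + M * (exp (t / β) - 1) := by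
    refine image_norm_le_of_norm_deriv_right_le_deriv_boundary
      (fun t ht ↦ (hderiv t ht).continuousAt.continuousWithinAt)
      (fun t ht ↦ (hderiv t (Ico_subset_Icc_self ht)).hasDerivWithinAt) (by simp)
      (fun t ↦ ((((hasDerivAt_id t).div_const β).exp.sub_const 1).const_mul M).const_add _)
      fun t ht ↦ ?_
    rw [norm_smul, norm_of_nonneg (by positivity), id, one_div, mul_comm (exp _), mul_comm M]
    exact mul_le_mul_of_nonneg_left (hGM t (Ico_subset_Icc_self ht)) (by positivity)
  intro t ht
  have hvt : v t = exp (-(t / β)) • exp (t / β) • v t := by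
    rw [smul_smul, ← exp_add, neg_add_cancel, exp_zero, one_smul]
  calc ‖v t‖ = exp (-(t / β)) * ‖exp (t / β) • v t‖ := by
        rw [hvt, norm_smul, norm_of_nonneg (exp_nonneg _), ← hvt]
    _ ≤ exp (-(t / β)) * (‖v 0‖ + M * (exp (t / β) - 1)) := by gcongr; exact hbound t ht
    _ = exp (-(t / β)) * ‖v 0‖ + (1 - exp (-(t / β))) * M := by
        rw [exp_neg]; field_simp

end IntegratingFactor

theorem uniform_bound_after_layer_general {E : Type*} [NormedAddCommGroup E] [NormedSpace ℝ E]
    (β T M : ℝ) (hβ : 0 < β) (G v v' : ℝ → E)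
    (hGM : ∀ s ∈ Set.Icc (0 : ℝ) T, ‖G s‖ ≤ M)
    (hv : ∀ t ∈ Set.Icc (0 : ℝ) T, HasDerivAt v (v' t) t)
    (hode : ∀ t ∈ Set.Icc (0 : ℝ) T, β • v' t + v t = G t) :
    ∀ t, 1 ≤ t → t ≤ T → ‖v t‖ ≤ Real.sqrt β * ‖v 0‖ + M := by
  intro t ht1 htT
  have ht : t ∈ Icc (0 : ℝ) T := ⟨zero_le_one.trans ht1, htT⟩
  have hM : 0 ≤ M := (norm_nonneg _).trans (hGM t ht)
  have hdecay := exp_neg_div_le_sqrt hβ ht1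
  calc ‖v t‖ ≤ exp (-(t / β)) * ‖v 0‖ + (1 - exp (-(t / β))) * M :=
        norm_le_of_smul_deriv_add_eq hβ hGM hv hode t ht
    _ ≤ √β * ‖v 0‖ + M := by
        gcongr
        nlinarith [exp_nonneg (-(t / β))]

/-- Uniform bound after the initial layer for the damped equation `β v' + v = G`. -/
theorem uniform_bound_after_layer {E : Type*} [NormedAddCommGroup E] [NormedSpace ℝ E]
    [CompleteSpace E]
    (β T M : ℝ) (hβ : 0 < β) (hT : 1 ≤ T) (G v v' : ℝ → E)
    (hG : ContinuousOn G (Set.Icc 0 T))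
    (hGM : ∀ s ∈ Set.Icc (0 : ℝ) T, ‖G s‖ ≤ M)
    (hv : ∀ t ∈ Set.Icc (0 : ℝ) T, HasDerivAt v (v' t) t)
    (hode : ∀ t ∈ Set.Icc (0 : ℝ) T, β • v' t + v t = G t) :
    ∀ t, 1 ≤ t → t ≤ T → ‖v t‖ ≤ Real.sqrt β * ‖v 0‖ + M :=
  uniform_bound_after_layer_general β T M hβ G v v' hGM hv hode
end

section
/- There exists a constant C > 0, depending only on β₀ > 0, such that for all β₁, β₂ with 0 < β₂ < β₁ ≤ β₀ and all t ≥ 1: β₂·(√(β₂/β₁)·e^{−t/β₁} − e^{−t/β₂})² ≤ C·t·(β₁ − β₂)/β₁². -/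
/-!
With `a = √(β₂/β₁)`, split `a e^{-t/β₁} - e^{-t/β₂}` as `a (e^{-t/β₁} - e^{-t/β₂}) + (a - 1) e^{-t/β₂}`.
Since `exp` is `1`-Lipschitz on `(-∞, 0]` and the difference lies in `[0, 1]`, the square of the first
bracket is at most `t/β₂ - t/β₁`, which after multiplying by `β₂` is `t (β₁ - β₂)/β₁`. The second
term is controlled by `1 - a ≤ 1 - a² = (β₁ - β₂)/β₁`, and `t ≥ 1` lets it be absorbed into the
same right-hand side.
-/

open Real

theorem exp_neg_sub_exp_neg_sq_le {x y : ℝ} (hx : 0 ≤ x) (hxy : x ≤ y) :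
    (exp (-x) - exp (-y)) ^ 2 ≤ y - x := by
  have hdiff_nonneg : 0 ≤ exp (-x) - exp (-y) := sub_nonneg.2 (exp_le_exp.2 (neg_le_neg hxy))
  have hdiff_le_one : exp (-x) - exp (-y) ≤ 1 := by
    linarith [exp_le_one_iff.2 (neg_nonpos.2 hx), exp_pos (-y)]
  have hlipschitz : exp (-x) - exp (-y) ≤ y - x := by
    have hsplit : exp (-x) - exp (-y) = exp (-x) * (1 - exp (-(y - x))) := by
      rw [mul_sub, mul_one, ← exp_add]; ring_nf
    rw [hsplit]
    calc exp (-x) * (1 - exp (-(y - x))) ≤ 1 * (y - x) :=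
          mul_le_mul (exp_le_one_iff.2 (neg_nonpos.2 hx))
            (by linarith [one_sub_le_exp_neg (y - x)])
            (sub_nonneg.2 (exp_le_one_iff.2 (by linarith))) zero_le_one
      _ = y - x := one_mul _
  nlinarith

theorem mul_sq_sqrt_div_mul_exp_sub_exp_le {β₁ β₂ t : ℝ} (hβ₂ : 0 < β₂) (h : β₂ ≤ β₁)
    (ht : 0 ≤ t) :
    β₂ * (√(β₂ / β₁) * exp (-t / β₁) - exp (-t / β₂)) ^ 2
      ≤ 2 * (t * (β₁ - β₂) / β₁) + 2 * (β₁ - β₂) := by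
  have hβ₁ : 0 < β₁ := hβ₂.trans_le h
  set a := √(β₂ / β₁)
  set E := exp (-(t / β₂))
  have ha_nonneg : 0 ≤ a := sqrt_nonneg _
  have hratio_le_one : β₂ / β₁ ≤ 1 := (div_le_one hβ₁).2 h
  have ha_le_one : a ≤ 1 := sqrt_le_one.2 hratio_le_one
  have hgap : 1 - a ≤ (β₁ - β₂) / β₁ := by
    calc 1 - a ≤ 1 - β₂ / β₁ := sub_le_sub_left (le_sqrt_self_iff.2 hratio_le_one) 1
      _ = (β₁ - β₂) / β₁ := by field_simp
  have hfirst : (a * (exp (-(t / β₁)) - E)) ^ 2 ≤ t / β₂ - t / β₁ := by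
    have hΔ := exp_neg_sub_exp_neg_sq_le (by positivity) (div_le_div_of_nonneg_left ht hβ₂ h)
    rw [mul_pow]
    nlinarith [sq_nonneg (exp (-(t / β₁)) - E), pow_le_one₀ ha_nonneg ha_le_one (n := 2)]
  have hsecond : ((a - 1) * E) ^ 2 ≤ (β₁ - β₂) / β₁ := by
    have hE : E ^ 2 ≤ 1 :=
      pow_le_one₀ (exp_pos _).le (exp_le_one_iff.2 (neg_nonpos.2 (by positivity)))
    calc ((a - 1) * E) ^ 2 = (1 - a) ^ 2 * E ^ 2 := by ring
      _ ≤ (1 - a) * 1 := mul_le_mul (by nlinarith) hE (sq_nonneg _) (by linarith)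
      _ ≤ (β₁ - β₂) / β₁ := by linarith
  calc β₂ * (a * exp (-t / β₁) - exp (-t / β₂)) ^ 2
      = β₂ * (a * (exp (-(t / β₁)) - E) + (a - 1) * E) ^ 2 := by rw [neg_div, neg_div]; ring
    _ ≤ β₂ * (2 * ((a * (exp (-(t / β₁)) - E)) ^ 2 + ((a - 1) * E) ^ 2)) := by
      gcongr; exact add_sq_le
    _ ≤ β₂ * (2 * ((t / β₂ - t / β₁) + (β₁ - β₂) / β₁)) := by gcongr
    _ = 2 * (t * (β₁ - β₂) / β₁) + 2 * (β₁ - β₂) * (β₂ / β₁) := by field_simp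
    _ ≤ 2 * (t * (β₁ - β₂) / β₁) + 2 * (β₁ - β₂) * 1 := by gcongr
    _ = 2 * (t * (β₁ - β₂) / β₁) + 2 * (β₁ - β₂) := by ring

/-- Hölder-type estimate on the mean of the velocity difference. -/
theorem mean_velocity_difference_estimate (β₀ : ℝ) (hβ₀ : 0 < β₀) :
    ∃ C > (0 : ℝ), ∀ β₁ β₂ t : ℝ, 0 < β₂ → β₂ < β₁ → β₁ ≤ β₀ → 1 ≤ t →
      β₂ * (Real.sqrt (β₂ / β₁) * Real.exp (-t / β₁) - Real.exp (-t / β₂)) ^ 2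
        ≤ C * t * (β₁ - β₂) / β₁ ^ 2 := by
  refine ⟨2 * β₀ + 2 * β₀ ^ 2, by positivity, fun β₁ β₂ t hβ₂ h₂₁ h₁₀ ht => ?_⟩
  have hβ₁ : 0 < β₁ := hβ₂.trans h₂₁
  calc β₂ * (√(β₂ / β₁) * exp (-t / β₁) - exp (-t / β₂)) ^ 2
      ≤ 2 * (t * (β₁ - β₂) / β₁) + 2 * (β₁ - β₂) :=
        mul_sq_sqrt_div_mul_exp_sub_exp_le hβ₂ h₂₁.le (by linarith)
    _ ≤ 2 * (t * (β₁ - β₂) / β₁) + 2 * (β₁ - β₂) * t := by nlinarith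
    _ = (2 * β₁ + 2 * β₁ ^ 2) * t * (β₁ - β₂) / β₁ ^ 2 := by field_simp
    _ ≤ (2 * β₀ + 2 * β₀ ^ 2) * t * (β₁ - β₂) / β₁ ^ 2 := by gcongr
end

section
/- Fix ε ∈ ℝ and set F(y) = (1−ε)/2·y² + (1/4)·y⁴ and f(y) = y³ + (1−ε)·y. Then there exist constants C₂, C₃ > 0, depending only on ε, such that for every M ∈ ℝ there is a constant C₄ > 0 (depending on ε and M) with f(y)·(y − M) ≥ −C₂·(y − M)² + C₃·F(y) − C₄ for all y ∈ ℝ. -/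
/-!
Expanding, `f(y)(y - M) = 2F(y) + y⁴/2 - M y³ - (1 - ε) M y`. Young's inequality
`M y³ ≤ y⁴/4 + M² y²` leaves `y⁴/4 - M² y² - (1 - ε) M y`, a quartic with positive leading
coefficient, hence bounded below by a constant depending on `ε` and `M`. So one may take
`C₃ = 2`, and the term `-C₂ (y - M)²` is pure slack.
-/

namespace PhaseFieldCrystal

noncomputable def potential (ε y : ℝ) : ℝ := (1 - ε) / 2 * y ^ 2 + 1 / 4 * y ^ 4

def nonlinearity (ε y : ℝ) : ℝ := y ^ 3 + (1 - ε) * y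

theorem neg_le_quartic_sub (b c y : ℝ) :
    -(2 * b ^ 2 + c ^ 2 + 1) ≤ y ^ 4 / 4 - b * y ^ 2 - c * y := by
  nlinarith [sq_nonneg (y ^ 2 - 4 * b), sq_nonneg (y ^ 2 - 1), sq_nonneg (y - 2 * c)]

theorem mul_cube_le (M y : ℝ) : M * y ^ 3 ≤ y ^ 4 / 4 + M ^ 2 * y ^ 2 := by
  nlinarith [sq_nonneg (y ^ 2 / 2 - M * y)]

theorem two_mul_potential_sub_le_nonlinearity_mul (ε M y : ℝ) :
    2 * potential ε y - (2 * M ^ 4 + ((1 - ε) * M) ^ 2 + 1) ≤ nonlinearity ε y * (y - M) := by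
  have hquartic := neg_le_quartic_sub (M ^ 2) ((1 - ε) * M) y
  unfold potential nonlinearity
  linear_combination mul_cube_le M y + hquartic

end PhaseFieldCrystal

/-- Pointwise coercivity estimate for the nonlinearity `f(y) = y³ + (1-ε)y`
against the potential `F(y) = (1-ε)/2·y² + (1/4)·y⁴`. -/
theorem pointwise_coercivity (ε : ℝ) :
    ∃ C₂ > (0 : ℝ), ∃ C₃ > (0 : ℝ), ∀ M : ℝ, ∃ C₄ > (0 : ℝ), ∀ y : ℝ,
      (y ^ 3 + (1 - ε) * y) * (y - M)
        ≥ -C₂ * (y - M) ^ 2 + C₃ * ((1 - ε) / 2 * y ^ 2 + (1 / 4) * y ^ 4) - C₄ := by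
  refine ⟨1, one_pos, 2, two_pos, fun M => ⟨2 * M ^ 4 + ((1 - ε) * M) ^ 2 + 1, by positivity,
    fun y => ?_⟩⟩
  have hcoercive := PhaseFieldCrystal.two_mul_potential_sub_le_nonlinearity_mul ε M y
  unfold PhaseFieldCrystal.potential PhaseFieldCrystal.nonlinearity at hcoercive
  linarith [sq_nonneg (y - M)]
end
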